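/- Let z ∈ ℂ with Im(z²) ≠ 0 and let Φ = (Φ₁, Φ₂)ᵀ : ℝ → ℂ² be a nowhere-zero continuously differentiable solution of Φ_x = (-i z² σ₃ + z · offdiag(q, -\bar{q})) Φ for a C¹ function q : ℝ → ℂ. Define q⁽¹⁾ = ((z|Φ₂|² + \bar{z}|Φ₁|²)/(z|Φ₁|² + \bar{z}|Φ₂|²))² · (-q + 2i(z² - \bar{z}²)Φ₁\bar{Φ}₂/(z|Φ₂|² + \bar{z}|Φ₁|²)) and Φ⁽¹⁾ = (\bar{Φ}₂/(z|Φ₁|² + \bar{z}|Φ₂|²), \bar{Φ}₁/(\bar{z}|Φ₁|² + z|Φ₂|²))ᵀ. Then z|Φ₁|² + \bar{z}|Φ₂|² and \bar{z}|Φ₁|² + z|Φ₂|² never vanish, and Φ⁽¹⁾ satisfies Φ⁽¹⁾_x = (-i z² σ₃ + z · offdiag(q⁽¹⁾, -\bar{q}⁽¹⁾)) Φ⁽¹⁾. -/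

import Mathlib

/-! Both denominators have real part `Re z · (|Φ₁|² + |Φ₂|²)` and `Im (z²) = 2 Re z Im z`, so
they never vanish. The second denominator is the first with `Φ₁, Φ₂` swapped, which is also its
complex conjugate. Differentiating `Φ⁽¹⁾` by the quotient rule and substituting the Lax equation
for `Φ` leaves, in each component, a rational identity in `Φ₁, Φ₂, Φ̄₁, Φ̄₂, z, z̄, q, q̄` whose only
denominators are these two. -/

open Complex

/-- Denominator `z|Φ₁|² + \bar z|Φ₂|²`. -/
noncomputable def bdDenom1 (z Φ₁ Φ₂ : ℂ) : ℂ :=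
  z * (‖Φ₁‖ : ℂ) ^ 2 + (starRingEnd ℂ) z * (‖Φ₂‖ : ℂ) ^ 2

/-- Denominator `\bar z|Φ₁|² + z|Φ₂|²`. -/
noncomputable def bdDenom2 (z Φ₁ Φ₂ : ℂ) : ℂ :=
  (starRingEnd ℂ) z * (‖Φ₁‖ : ℂ) ^ 2 + z * (‖Φ₂‖ : ℂ) ^ 2

/-- The Bäcklund-transformed potential
`q⁽¹⁾ = ((z|Φ₂|²+\bar z|Φ₁|²)/(z|Φ₁|²+\bar z|Φ₂|²))²
  (-q + 2i(z²-\bar z²) Φ₁ \barΦ₂ / (z|Φ₂|²+\bar z|Φ₁|²))`. -/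
noncomputable def backlundQ (z q Φ₁ Φ₂ : ℂ) : ℂ :=
  (bdDenom1 z Φ₂ Φ₁ / bdDenom1 z Φ₁ Φ₂) ^ 2 *
    (-q + 2 * Complex.I * (z ^ 2 - ((starRingEnd ℂ) z) ^ 2) * Φ₁ * (starRingEnd ℂ) Φ₂ /
        bdDenom1 z Φ₂ Φ₁)

/-- First component of the Bäcklund-transformed eigenvector. -/
noncomputable def backlundPhi1 (z Φ₁ Φ₂ : ℂ) : ℂ := (starRingEnd ℂ) Φ₂ / bdDenom1 z Φ₁ Φ₂

/-- Second component of the Bäcklund-transformed eigenvector. -/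
noncomputable def backlundPhi2 (z Φ₁ Φ₂ : ℂ) : ℂ := (starRingEnd ℂ) Φ₁ / bdDenom2 z Φ₁ Φ₂

open ComplexConjugate

-- the two components of `(-i z² σ₃ + z · offdiag(q, -q̄)) (a, b)ᵀ`
def laxX₁ (z q a b : ℂ) : ℂ := -Complex.I * z ^ 2 * a + z * q * b

def laxX₂ (z q a b : ℂ) : ℂ := Complex.I * z ^ 2 * b - z * conj q * a

theorem Complex.re_ne_zero_of_im_sq_ne_zero {z : ℂ} (hz : (z ^ 2).im ≠ 0) : z.re ≠ 0 := by
  rintro h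
  simp [sq, h] at hz

theorem bdDenom2_eq_bdDenom1 (z a b : ℂ) : bdDenom2 z a b = bdDenom1 z b a := add_comm _ _

theorem bdDenom1_eq_mul_conj (z a b : ℂ) :
    bdDenom1 z a b = z * (a * conj a) + conj z * (b * conj b) := by
  simp only [bdDenom1, Complex.mul_conj']

theorem conj_bdDenom1 (z a b : ℂ) : conj (bdDenom1 z a b) = bdDenom1 z b a := by
  simp only [bdDenom1_eq_mul_conj, map_add, map_mul, Complex.conj_conj]
  ring

theorem bdDenom1_re (z a b : ℂ) : (bdDenom1 z a b).re = z.re * (‖a‖ ^ 2 + ‖b‖ ^ 2) := by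
  simp [bdDenom1, ← Complex.ofReal_pow]
  ring

theorem bdDenom1_ne_zero {z a b : ℂ} (hz : z.re ≠ 0) (hab : ¬(a = 0 ∧ b = 0)) :
    bdDenom1 z a b ≠ 0 := by
  have hpos : 0 < ‖a‖ ^ 2 + ‖b‖ ^ 2 := by
    rcases not_and_or.mp hab with h | h <;> positivity
  intro h
  have := bdDenom1_re z a b
  rw [h, Complex.zero_re] at this
  exact mul_ne_zero hz hpos.ne' this.symm

theorem hasDerivAt_bdDenom1 (z : ℂ) {f g : ℝ → ℂ} {f' g' : ℂ} {x : ℝ}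
    (hf : HasDerivAt f f' x) (hg : HasDerivAt g g' x) :
    HasDerivAt (fun y => bdDenom1 z (f y) (g y))
      (z * (f' * conj (f x) + f x * conj f') + conj z * (g' * conj (g x) + g x * conj g')) x := by
  simp only [bdDenom1_eq_mul_conj]
  exact ((hf.mul hf.star).const_mul z).add ((hg.mul hg.star).const_mul (conj z))

section LaxSolution

variable {z q₀ : ℂ} {f g : ℝ → ℂ} {x : ℝ}

theorem hasDerivAt_backlundPhi1 (hf : HasDerivAt f (laxX₁ z q₀ (f x) (g x)) x)
    (hg : HasDerivAt g (laxX₂ z q₀ (f x) (g x)) x)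
    (h₁ : bdDenom1 z (f x) (g x) ≠ 0) (h₂ : bdDenom1 z (g x) (f x) ≠ 0) :
    HasDerivAt (fun y => backlundPhi1 z (f y) (g y))
      (laxX₁ z (backlundQ z q₀ (f x) (g x)) (backlundPhi1 z (f x) (g x))
        (backlundPhi2 z (f x) (g x))) x := by
  refine (hg.star.div (hasDerivAt_bdDenom1 z hf hg) h₁).congr_deriv ?_
  generalize f x = a, g x = b at *
  simp only [laxX₁, laxX₂, backlundQ, backlundPhi1, backlundPhi2, bdDenom2_eq_bdDenom1,
    Complex.star_def, map_add, map_sub, map_mul, map_neg, map_pow, Complex.conj_conj,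
    Complex.conj_I]
  -- keep the denominators opaque so that `field_simp` can clear them, and expand them afterwards
  generalize hD₁ : bdDenom1 z a b = D₁ at *
  generalize hD₂ : bdDenom1 z b a = D₂ at *
  field_simp
  rw [bdDenom1_eq_mul_conj] at hD₁ hD₂
  subst hD₁ hD₂
  ring

theorem hasDerivAt_backlundPhi2 (hf : HasDerivAt f (laxX₁ z q₀ (f x) (g x)) x)
    (hg : HasDerivAt g (laxX₂ z q₀ (f x) (g x)) x)
    (h₁ : bdDenom1 z (f x) (g x) ≠ 0) (h₂ : bdDenom1 z (g x) (f x) ≠ 0) :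
    HasDerivAt (fun y => backlundPhi2 z (f y) (g y))
      (laxX₂ z (backlundQ z q₀ (f x) (g x)) (backlundPhi1 z (f x) (g x))
        (backlundPhi2 z (f x) (g x))) x := by
  simp only [backlundPhi2, bdDenom2_eq_bdDenom1]
  refine (hf.star.div (hasDerivAt_bdDenom1 z hg hf) h₂).congr_deriv ?_
  generalize f x = a, g x = b at *
  simp only [laxX₁, laxX₂, backlundQ, backlundPhi1, Complex.star_def, map_add, map_sub,
    map_mul, map_neg, map_pow, map_div₀, map_ofNat, Complex.conj_conj, Complex.conj_I,
    conj_bdDenom1]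
  generalize hD₁ : bdDenom1 z a b = D₁ at *
  generalize hD₂ : bdDenom1 z b a = D₂ at *
  field_simp
  rw [bdDenom1_eq_mul_conj] at hD₁ hD₂
  subst hD₁ hD₂
  ring

end LaxSolution

theorem backlund_x_part_general (z : ℂ) (hz : (z ^ 2).im ≠ 0) (q : ℝ → ℂ)
    (Φ₁ Φ₂ : ℝ → ℂ) (hnz : ∀ x : ℝ, ¬(Φ₁ x = 0 ∧ Φ₂ x = 0))
    (hΦ₁ : ∀ x : ℝ, HasDerivAt Φ₁ (-Complex.I * z ^ 2 * Φ₁ x + z * q x * Φ₂ x) x)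
    (hΦ₂ : ∀ x : ℝ, HasDerivAt Φ₂ (Complex.I * z ^ 2 * Φ₂ x
      - z * (starRingEnd ℂ) (q x) * Φ₁ x) x) :
    (∀ x : ℝ, bdDenom1 z (Φ₁ x) (Φ₂ x) ≠ 0 ∧ bdDenom2 z (Φ₁ x) (Φ₂ x) ≠ 0) ∧
    (∀ x : ℝ,
      HasDerivAt (fun y => backlundPhi1 z (Φ₁ y) (Φ₂ y))
        (-Complex.I * z ^ 2 * backlundPhi1 z (Φ₁ x) (Φ₂ x)
          + z * backlundQ z (q x) (Φ₁ x) (Φ₂ x) * backlundPhi2 z (Φ₁ x) (Φ₂ x)) x ∧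
      HasDerivAt (fun y => backlundPhi2 z (Φ₁ y) (Φ₂ y))
        (Complex.I * z ^ 2 * backlundPhi2 z (Φ₁ x) (Φ₂ x)
          - z * (starRingEnd ℂ) (backlundQ z (q x) (Φ₁ x) (Φ₂ x))
            * backlundPhi1 z (Φ₁ x) (Φ₂ x)) x) := by
  have hre := Complex.re_ne_zero_of_im_sq_ne_zero hz
  have hD (x : ℝ) : bdDenom1 z (Φ₁ x) (Φ₂ x) ≠ 0 ∧ bdDenom1 z (Φ₂ x) (Φ₁ x) ≠ 0 :=
    ⟨bdDenom1_ne_zero hre (hnz x), bdDenom1_ne_zero hre fun h => hnz x h.symm⟩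
  refine ⟨fun x => by simpa only [bdDenom2_eq_bdDenom1] using hD x, fun x => ⟨?_, ?_⟩⟩
  · exact hasDerivAt_backlundPhi1 (hΦ₁ x) (hΦ₂ x) (hD x).1 (hD x).2
  · exact hasDerivAt_backlundPhi2 (hΦ₁ x) (hΦ₂ x) (hD x).1 (hD x).2

theorem backlund_x_part (z : ℂ) (hz : (z ^ 2).im ≠ 0) (q : ℝ → ℂ) (hq : ContDiff ℝ 1 q)
    (Φ₁ Φ₂ : ℝ → ℂ) (hnz : ∀ x : ℝ, ¬(Φ₁ x = 0 ∧ Φ₂ x = 0))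
    (hΦ₁ : ∀ x : ℝ, HasDerivAt Φ₁ (-Complex.I * z ^ 2 * Φ₁ x + z * q x * Φ₂ x) x)
    (hΦ₂ : ∀ x : ℝ, HasDerivAt Φ₂ (Complex.I * z ^ 2 * Φ₂ x
      - z * (starRingEnd ℂ) (q x) * Φ₁ x) x) :
    (∀ x : ℝ, bdDenom1 z (Φ₁ x) (Φ₂ x) ≠ 0 ∧ bdDenom2 z (Φ₁ x) (Φ₂ x) ≠ 0) ∧
    (∀ x : ℝ,
      HasDerivAt (fun y => backlundPhi1 z (Φ₁ y) (Φ₂ y))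
        (-Complex.I * z ^ 2 * backlundPhi1 z (Φ₁ x) (Φ₂ x)
          + z * backlundQ z (q x) (Φ₁ x) (Φ₂ x) * backlundPhi2 z (Φ₁ x) (Φ₂ x)) x ∧
      HasDerivAt (fun y => backlundPhi2 z (Φ₁ y) (Φ₂ y))
        (Complex.I * z ^ 2 * backlundPhi2 z (Φ₁ x) (Φ₂ x)
          - z * (starRingEnd ℂ) (backlundQ z (q x) (Φ₁ x) (Φ₂ x))
            * backlundPhi1 z (Φ₁ x) (Φ₂ x)) x) :=
  backlund_x_part_general z hz q Φ₁ Φ₂ hnz hΦ₁ hΦ₂
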